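/- arXiv:1205.5504 — 3 statements merged into one kernel-verified Lean document; each statement's English description precedes it below -/
import Mathlib

section
/- (Effective Borel–Cantelli for ML-randomness) Let P be a computable probability measure on {0,1}^ℕ and let U ⊆ ℕ × S be a recursively enumerable set of pairs such that P(Ũ_n) < 2^{-n} for every n, where Ũ_n is the union of cylinders Δ(s) over s with (n,s) ∈ U. Then every sequence that is Martin-Löf random with respect to P lies in only finitely many of the sets Ũ_n; equivalently, the ML-random sequences are contained in the complement of limsup_n Ũ_n. -/
open MeasureTheory Filter

/-- Cylinder set of infinite binary sequences extending the finite string `s`. -/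
def cyl (s : List Bool) : Set (ℕ → Bool) := {x | ∀ i : Fin s.length, x i.val = s.get i}

/-- The length-`n` prefix of the infinite sequence `y`. -/
def pre (y : ℕ → Bool) (n : ℕ) : List Bool := List.ofFn (fun i : Fin n => y i.val)

/-- `select x y` is the subsequence `x/y` of `x` at positions `i` with `y i = true`. -/
noncomputable def select (x y : ℕ → Bool) : ℕ → Bool :=
  fun n => x (Nat.nth (fun i => y i = true) n)

/-- Subsequence of a finite string `s` at the positions where `t` is `true`. -/
def selStr (s t : List Bool) : List Bool :=
  ((List.zip s t).filter (fun p => p.2)).map Prod.fst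

/-- `s` is a prefix of the infinite sequence `f`. -/
def IsPrefixSeq (s : List Bool) (f : ℕ → Bool) : Prop :=
  ∀ i : Fin s.length, f i.val = s.get i

/-- Open set determined by level `n` of a test. -/
def openU (U : ℕ → Set (List Bool)) (n : ℕ) : Set (ℕ → Bool) := ⋃ s ∈ U n, cyl s

/-- Martin-Löf test with respect to the measure `μ`. -/
def MLTest (μ : Measure (ℕ → Bool)) (U : ℕ → Set (List Bool)) : Prop :=
  REPred (fun p : ℕ × List Bool => p.2 ∈ U p.1) ∧
  (∀ n, openU U (n + 1) ⊆ openU U n) ∧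
  (∀ n, μ (openU U n) < (2 : ENNReal)⁻¹ ^ n)

/-- `x` is Martin-Löf random w.r.t. `μ`: it passes every ML test. -/
def MLRandom (μ : Measure (ℕ → Bool)) (x : ℕ → Bool) : Prop :=
  ∀ U : ℕ → Set (List Bool), MLTest μ U → ∃ n, x ∉ openU U n

/-- `μ` is a computable measure. -/
def ComputableMeasure (μ : Measure (ℕ → Bool)) : Prop :=
  ∃ A : List Bool → ℕ → ℚ, Computable₂ A ∧
    ∀ s k, |(μ (cyl s)).toReal - (A s k : ℝ)| < 1 / (k + 1)

/-- The uniform (fair-coin) measure, characterized on cylinders. -/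
def IsUniform (μ : Measure (ℕ → Bool)) : Prop :=
  ∀ s : List Bool, μ (cyl s) = (2 : ENNReal)⁻¹ ^ s.length

/-!
The levels beyond `n` form a new test `Vₙ = ⋃_{k > n} Ũ_k`: it is again r.e. (dovetail over `k`),
nested, and `μ(Vₙ) ≤ ∑_{k > n} μ(Ũ_k) < ∑_{k > n} 2^{-k} = 2^{-n}`. A random `x` avoids some `Vₙ`,
so it lies in no `Ũ_k` with `k > n`.
-/

theorem REPred.comp {α β : Type*} [Primcodable α] [Primcodable β] {p : β → Prop}
    (hp : REPred p) {f : α → β} (hf : Computable f) : REPred fun a => p (f a) :=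
  Partrec.comp hp hf

open Nat.Partrec.Code in
-- Dovetailing: search over pairs `(m, t)` for a witness `m` confirmed within `t` steps.
theorem REPred.exists_nat {α : Type*} [Primcodable α] {p : α × ℕ → Prop} (hp : REPred p) :
    REPred fun a => ∃ m, p (a, m) := by
  obtain ⟨c, hc⟩ := exists_code.1 hp
  have hdom : ∀ q, (eval c (Encodable.encode q)).Dom ↔ p q := fun q => by
    simp [hc, Part.assert]
  have hsearch : Computable₂ fun (a : α) (k : ℕ) =>
      (evaln k.unpair.2 c (Encodable.encode (a, k.unpair.1))).map fun _ => () := by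
    refine Computable.option_map ?_ (Computable.const ())
    have hk : Computable fun q : α × ℕ => q.2.unpair := Primrec.unpair.to_comp.comp Computable.snd
    exact primrec_evaln.to_comp.comp (((Computable.snd.comp hk).pair (Computable.const c)).pair
      (Computable.encode.comp (Computable.fst.pair (Computable.fst.comp hk))))
  refine (Partrec.rfindOpt hsearch).dom_re.of_eq fun a => ?_
  rw [Nat.rfindOpt_dom]
  constructor
  · rintro ⟨k, _, hk⟩
    obtain ⟨v, hv, -⟩ := Option.map_eq_some_iff.1 hk
    exact ⟨k.unpair.1, (hdom _).1 (Part.dom_iff_mem.2 ⟨v, evaln_sound hv⟩)⟩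
  · rintro ⟨m, hm⟩
    obtain ⟨v, hv⟩ := Part.dom_iff_mem.1 ((hdom (a, m)).2 hm)
    obtain ⟨t, ht⟩ := evaln_complete.1 hv
    refine ⟨Nat.pair m t, (), ?_⟩
    simp only [Nat.unpair_pair, Option.mem_def, Option.map_eq_some_iff]
    exact ⟨v, ht, trivial⟩

theorem ENNReal.tsum_inv_two_pow_add_succ (n : ℕ) :
    ∑' m : ℕ, (2 : ENNReal)⁻¹ ^ (n + m + 1) = 2⁻¹ ^ n := by
  simp only [add_assoc n, pow_add _ n, ENNReal.tsum_mul_left, ENNReal.tsum_geometric_add_one,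
    ENNReal.one_sub_inv_two, inv_inv, ENNReal.inv_mul_cancel two_ne_zero ENNReal.ofNat_ne_top,
    mul_one]

theorem measure_iUnion_add_succ_lt {α : Type*} [MeasurableSpace α] {μ : Measure α}
    {A : ℕ → Set α} (hA : ∀ n, μ (A n) < 2⁻¹ ^ n) (n : ℕ) :
    μ (⋃ m, A (n + m + 1)) < 2⁻¹ ^ n :=
  calc μ (⋃ m, A (n + m + 1)) ≤ ∑' m, μ (A (n + m + 1)) := measure_iUnion_le _
    _ < ∑' m : ℕ, (2 : ENNReal)⁻¹ ^ (n + m + 1) := by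
      refine ENNReal.tsum_lt_tsum (i := 0) ?_ (fun m => (hA _).le) (hA _)
      exact ne_top_of_le_ne_top (by simp [ENNReal.tsum_inv_two_pow_add_succ])
        (ENNReal.tsum_le_tsum fun m => (hA _).le)
    _ = 2⁻¹ ^ n := ENNReal.tsum_inv_two_pow_add_succ n

def tailU (U : ℕ → Set (List Bool)) (n : ℕ) : Set (List Bool) := {s | ∃ m, s ∈ U (n + m + 1)}

theorem openU_tailU (U : ℕ → Set (List Bool)) (n : ℕ) :
    openU (tailU U) n = ⋃ m, openU U (n + m + 1) := by
  ext y
  simp only [openU, tailU, Set.mem_iUnion, Set.mem_ofPred_eq, exists_prop]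
  constructor
  · rintro ⟨s, ⟨m, hs⟩, hy⟩; exact ⟨m, s, hs, hy⟩
  · rintro ⟨m, s, hs, hy⟩; exact ⟨s, ⟨m, hs⟩, hy⟩

theorem openU_tailU_succ_subset (U : ℕ → Set (List Bool)) (n : ℕ) :
    openU (tailU U) (n + 1) ⊆ openU (tailU U) n := by
  simp only [openU_tailU, Set.iUnion_subset_iff]
  intro m
  rw [show n + 1 + m + 1 = n + (m + 1) + 1 by omega]
  exact Set.subset_iUnion (fun k => openU U (n + k + 1)) (m + 1)

theorem REPred.tailU {U : ℕ → Set (List Bool)}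
    (hU : REPred fun p : ℕ × List Bool => p.2 ∈ U p.1) :
    REPred fun p : ℕ × List Bool => p.2 ∈ tailU U p.1 := by
  have hshift : Computable fun q : (ℕ × List Bool) × ℕ => (q.1.1 + q.2 + 1, q.1.2) :=
    (Primrec.nat_add.comp (Primrec.nat_add.comp (Primrec.fst.comp Primrec.fst) Primrec.snd)
      (Primrec.const 1)).to_comp.pair (Computable.snd.comp Computable.fst)
  exact (hU.comp hshift).exists_nat

theorem MLTest.tailU {μ : Measure (ℕ → Bool)} {U : ℕ → Set (List Bool)}
    (hU : REPred fun p : ℕ × List Bool => p.2 ∈ U p.1)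
    (hμU : ∀ n, μ (openU U n) < 2⁻¹ ^ n) : MLTest μ (tailU U) :=
  ⟨hU.tailU, openU_tailU_succ_subset U, fun n => by
    simpa only [openU_tailU] using measure_iUnion_add_succ_lt hμU n⟩

theorem Set.finite_of_notMem_iUnion_add_succ {α : Type*} {A : ℕ → Set α} {x : α} {n : ℕ}
    (hx : x ∉ ⋃ m, A (n + m + 1)) : {k | x ∈ A k}.Finite := by
  refine (Set.finite_Iic n).subset fun k hk => ?_
  by_contra hkn
  obtain ⟨m, rfl⟩ : ∃ m, k = n + m + 1 := ⟨k - n - 1, by rw [Set.mem_Iic, not_le] at hkn; omega⟩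
  exact hx (Set.mem_iUnion.2 ⟨m, hk⟩)

theorem stmt3_general (μ : Measure (ℕ → Bool))
    (U : ℕ → Set (List Bool))
    (hre : REPred (fun p : ℕ × List Bool => p.2 ∈ U p.1))
    (hμU : ∀ n, μ (openU U n) < (2 : ENNReal)⁻¹ ^ n)
    (x : ℕ → Bool) (hx : MLRandom μ x) :
    {n | x ∈ openU U n}.Finite := by
  obtain ⟨n, hn⟩ := hx (tailU U) (MLTest.tailU hre hμU)
  rw [openU_tailU] at hn
  exact Set.finite_of_notMem_iUnion_add_succ hn

/-- (Effective Borel–Cantelli) Let `μ` be a computable probability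
measure and `U` an r.e. set of pairs with `μ(Ũ_n) < 2^{-n}` for every `n`. Then
every ML-random sequence lies in only finitely many of the `Ũ_n`. -/
theorem stmt3 (μ : Measure (ℕ → Bool)) [IsProbabilityMeasure μ]
    (hμ : ComputableMeasure μ) (U : ℕ → Set (List Bool))
    (hre : REPred (fun p : ℕ × List Bool => p.2 ∈ U p.1))
    (hμU : ∀ n, μ (openU U n) < (2 : ENNReal)⁻¹ ^ n)
    (x : ℕ → Bool) (hx : MLRandom μ x) :
    {n | x ∈ openU U n}.Finite :=
  stmt3_general μ U hre hμU x hx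
end

section
/- If y ∈ {0,1}^ℕ is a computable sequence with infinitely many 1's, then for every x that is Martin-Löf random with respect to the uniform measure, the selected subsequence x/y is also Martin-Löf random with respect to the uniform measure. -/
open MeasureTheory Filter

/-!
Selecting the coordinates of a uniformly random sequence along an infinite set of positions
gives again a uniformly random sequence, so the selection map `x ↦ x/y` preserves the uniform
measure. When `y` is computable, the prefixes of `x/y` are computable from the prefixes of `x`,
so every Martin-Löf test `U` pulls back along the selection to the test
`{t | t/y ∈ U n}`, which has the same measure at every level. A test catching `x/y` therefore
yields a test catching `x`.
-/

section Prefix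

lemma pre_length (f : ℕ → Bool) (n : ℕ) : (pre f n).length = n := by simp [pre]

lemma getElem_pre (f : ℕ → Bool) {n i : ℕ} (hi : i < (pre f n).length) : (pre f n)[i] = f i := by
  simp [pre]

lemma pre_succ (f : ℕ → Bool) (n : ℕ) : pre f (n + 1) = pre f n ++ [f n] := by
  rw [pre, List.ofFn_succ', List.concat_eq_append]
  simp [pre]

lemma take_pre (f : ℕ → Bool) {m n : ℕ} (h : m ≤ n) : (pre f n).take m = pre f m :=
  List.ext_getElem (by simp [pre_length, h]) fun i _ _ => by simp [pre]

lemma mem_cyl_iff_pre_eq {x : ℕ → Bool} {t : List Bool} : x ∈ cyl t ↔ pre x t.length = t := by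
  refine ⟨fun h => List.ext_getElem (pre_length x _) fun i hi _ => ?_, fun h i => ?_⟩
  · rw [getElem_pre]; exact h ⟨i, by rwa [pre_length] at hi⟩
  · rw [List.get_eq_getElem, ← List.getElem_of_eq h (by rw [pre_length]; exact i.2), getElem_pre]

lemma mem_cyl_pre (f : ℕ → Bool) (n : ℕ) : f ∈ cyl (pre f n) :=
  mem_cyl_iff_pre_eq.2 (by rw [pre_length])

lemma cyl_nil : cyl [] = Set.univ :=
  Set.eq_univ_of_forall fun _ i => i.elim0

end Prefix

section Measurability

lemma measurableSet_cyl (s : List Bool) : MeasurableSet (cyl s) := by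
  have : cyl s = ⋂ i : Fin s.length, (fun x : ℕ → Bool => x i) ⁻¹' {s.get i} := by
    ext x; simp [cyl]
  rw [this]
  exact .iInter fun i => measurable_pi_apply _ (measurableSet_singleton _)

lemma measurableSet_openU (U : ℕ → Set (List Bool)) (n : ℕ) : MeasurableSet (openU U n) :=
  .biUnion (Set.to_countable _) fun s _ => measurableSet_cyl s

lemma preimage_eval_singleton_eq_biUnion_cyl (i : ℕ) (b : Bool) :
    (fun x : ℕ → Bool => x i) ⁻¹' {b} = ⋃ t ∈ {t : List Bool | t[i]? = some b}, cyl t := by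
  ext x
  simp only [Set.mem_preimage, Set.mem_singleton_iff, Set.mem_iUnion, Set.mem_ofPred_eq,
    exists_prop]
  constructor
  · rintro rfl
    refine ⟨pre x (i + 1), ?_, mem_cyl_pre x (i + 1)⟩
    rw [List.getElem?_eq_getElem (by rw [pre_length]; omega), getElem_pre]
  · rintro ⟨t, ht, hx⟩
    obtain ⟨hi, rfl⟩ := List.getElem?_eq_some_iff.1 ht
    exact hx ⟨i, hi⟩

lemma generateFrom_range_cyl :
    MeasurableSpace.generateFrom (Set.range cyl) =
      (inferInstance : MeasurableSpace (ℕ → Bool)) := by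
  refine le_antisymm (MeasurableSpace.generateFrom_le ?_) ?_
  · rintro _ ⟨s, rfl⟩
    exact measurableSet_cyl s
  · refine iSup_le fun i => MeasurableSpace.comap_le_iff_le_map.2 fun B _ => ?_
    change MeasurableSet[MeasurableSpace.generateFrom (Set.range cyl)]
      ((fun x : ℕ → Bool => x i) ⁻¹' B)
    rw [← Set.biUnion_preimage_singleton]
    refine .biUnion (Set.to_countable _) fun b _ => ?_
    rw [preimage_eval_singleton_eq_biUnion_cyl]
    exact .biUnion (Set.to_countable _)
      fun t _ => MeasurableSpace.measurableSet_generateFrom ⟨t, rfl⟩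

lemma isPiSystem_range_cyl : IsPiSystem (Set.range cyl) := by
  have key : ∀ {s t : List Bool}, s.length ≤ t.length → (cyl s ∩ cyl t).Nonempty →
      cyl s ∩ cyl t = cyl t := by
    rintro s t hst ⟨x, hxs, hxt⟩
    refine Set.inter_eq_self_of_subset_right fun z hz => ?_
    rw [mem_cyl_iff_pre_eq] at hxs hxt hz ⊢
    rw [← take_pre z hst, hz, ← hxt, take_pre x hst, hxs]
  rintro _ ⟨s, rfl⟩ _ ⟨t, rfl⟩ hne
  rcases le_total s.length t.length with h | h
  · exact ⟨t, (key h hne).symm⟩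
  · exact ⟨s, by rw [Set.inter_comm] at hne ⊢; exact (key h hne).symm⟩

end Measurability

section UniformMeasure

def cylOn (F : Finset ℕ) (v : ℕ → Bool) : Set (ℕ → Bool) := {x | ∀ i ∈ F, x i = v i}

lemma measurableSet_cylOn (F : Finset ℕ) (v : ℕ → Bool) : MeasurableSet (cylOn F v) := by
  have : cylOn F v = ⋂ i ∈ F, (fun x : ℕ → Bool => x i) ⁻¹' {v i} := by
    ext x; simp [cylOn]
  rw [this]
  exact .biInter F.countable_toSet fun i _ => measurable_pi_apply _ (measurableSet_singleton _)

lemma cylOn_range (N : ℕ) (v : ℕ → Bool) : cylOn (Finset.range N) v = cyl (pre v N) := by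
  ext x
  simp only [cylOn, cyl, Finset.mem_range, Set.mem_ofPred_eq, List.get_eq_getElem, getElem_pre]
  exact ⟨fun h i => h i (by simpa [pre_length] using i.2),
    fun h i hi => h ⟨i, by rwa [pre_length]⟩⟩

lemma cylOn_eq_union_update {F : Finset ℕ} {j : ℕ} (hj : j ∉ F) (v : ℕ → Bool) :
    cylOn F v = cylOn (insert j F) (Function.update v j true) ∪
      cylOn (insert j F) (Function.update v j false) := by
  have hne : ∀ i ∈ F, i ≠ j := fun i hi h => hj (h ▸ hi)
  ext x
  simp only [cylOn, Set.mem_ofPred_eq, Set.mem_union, Finset.forall_mem_insert,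
    Function.update_self]
  constructor
  · intro h
    cases hxj : x j
    · exact .inr ⟨rfl, fun i hi => by rw [Function.update_of_ne (hne i hi), h i hi]⟩
    · exact .inl ⟨rfl, fun i hi => by rw [Function.update_of_ne (hne i hi), h i hi]⟩
  · rintro (⟨-, h⟩ | ⟨-, h⟩) i hi <;> simpa [Function.update_of_ne (hne i hi)] using h i hi

lemma disjoint_cylOn_update (F : Finset ℕ) (j : ℕ) (v : ℕ → Bool) :
    Disjoint (cylOn (insert j F) (Function.update v j true))
      (cylOn (insert j F) (Function.update v j false)) :=
  Set.disjoint_left.2 fun x h₁ h₂ => by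
    simpa using (h₁ j (F.mem_insert_self j)).symm.trans (h₂ j (F.mem_insert_self j))

lemma IsUniform.isProbabilityMeasure {μ : Measure (ℕ → Bool)} (hμ : IsUniform μ) :
    IsProbabilityMeasure μ :=
  ⟨by simpa [cyl_nil] using hμ []⟩

/-- Induction on the number `k` of free positions below `N`: with none free the set is a
cylinder, and freeing one position splits the set into two halves of equal measure. -/
lemma IsUniform.measure_cylOn_of_subset_range {μ : Measure (ℕ → Bool)} (hμ : IsUniform μ)
    (N k : ℕ) : ∀ F : Finset ℕ, F ⊆ Finset.range N → F.card + k = N → ∀ v : ℕ → Bool,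
      μ (cylOn F v) = (2 : ENNReal)⁻¹ ^ F.card := by
  induction k with
  | zero =>
    intro F hFN hcard v
    obtain rfl : F = Finset.range N :=
      Finset.eq_of_subset_of_card_le hFN (by simp [← hcard])
    rw [cylOn_range, hμ, pre_length, Finset.card_range]
  | succ k ih =>
    intro F hFN hcard v
    obtain ⟨j, hjN, hjF⟩ : ∃ j ∈ Finset.range N, j ∉ F :=
      Finset.exists_of_ssubset (Finset.ssubset_iff_subset_ne.2
        ⟨hFN, fun h => by simp [h] at hcard⟩)
    have hins : insert j F ⊆ Finset.range N := Finset.insert_subset hjN hFN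
    have hcard' : (insert j F).card + k = N := by rw [Finset.card_insert_of_notMem hjF]; omega
    rw [cylOn_eq_union_update hjF, measure_union (disjoint_cylOn_update F j v)
      (measurableSet_cylOn _ _), ih _ hins hcard', ih _ hins hcard',
      Finset.card_insert_of_notMem hjF, ← two_mul, pow_succ, mul_comm, mul_assoc,
      ENNReal.inv_mul_cancel two_ne_zero ENNReal.ofNat_ne_top, mul_one]

lemma IsUniform.measure_cylOn {μ : Measure (ℕ → Bool)} (hμ : IsUniform μ) (F : Finset ℕ)
    (v : ℕ → Bool) : μ (cylOn F v) = (2 : ENNReal)⁻¹ ^ F.card := by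
  obtain ⟨N, hN⟩ := F.exists_nat_subset_range
  have : F.card ≤ N := by simpa using Finset.card_le_card hN
  exact hμ.measure_cylOn_of_subset_range N (N - F.card) F hN (by omega) v

end UniformMeasure

section Selection

variable (y : ℕ → Bool)

lemma measurable_select : Measurable fun x : ℕ → Bool => select x y :=
  measurable_pi_iff.2 fun _ => measurable_pi_apply _

variable {y}

lemma preimage_select_cyl (hy : {i | y i = true}.Infinite) (s : List Bool) :
    (fun x => select x y) ⁻¹' cyl s =
      cylOn ((Finset.range s.length).image (Nat.nth fun i => y i = true))
        (fun j => s.getD (Nat.count (fun i => y i = true) j) false) := by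
  ext x
  simp only [Set.mem_preimage, cyl, cylOn, Set.mem_ofPred_eq, Finset.forall_mem_image,
    Finset.mem_range, Nat.count_nth_of_infinite hy, select]
  exact ⟨fun h i hi => by simpa [hi] using h ⟨i, hi⟩, fun h i => by simpa using h i.2⟩

lemma IsUniform.measurePreserving_select {μ : Measure (ℕ → Bool)} (hμ : IsUniform μ)
    (hy : {i | y i = true}.Infinite) : MeasurePreserving (fun x => select x y) μ μ := by
  have := hμ.isProbabilityMeasure
  have := Measure.isProbabilityMeasure_map (μ := μ) (measurable_select y).aemeasurable
  refine ⟨measurable_select y, ext_of_generate_finite _ generateFrom_range_cyl.symm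
    isPiSystem_range_cyl ?_ (by simp)⟩
  rintro _ ⟨s, rfl⟩
  rw [Measure.map_apply (measurable_select y) (measurableSet_cyl s), preimage_select_cyl hy,
    hμ.measure_cylOn, hμ s, Finset.card_image_of_injective _ (Nat.nth_injective hy),
    Finset.card_range]

end Selection

section PullbackTest

def selectPrefix (y x : ℕ → Bool) : ℕ → List Bool
  | 0 => []
  | N + 1 => selectPrefix y x N ++ cond (y N) [x N] []

lemma selectPrefix_congr (y : ℕ → Bool) {x x' : ℕ → Bool} {N : ℕ} (h : ∀ k < N, x k = x' k) :
    selectPrefix y x N = selectPrefix y x' N := by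
  induction N with
  | zero => rfl
  | succ N ih =>
    rw [selectPrefix, selectPrefix, ih fun k hk => h k (by omega), h N (by omega)]

lemma selectPrefix_eq_pre_select (y x : ℕ → Bool) (N : ℕ) :
    selectPrefix y x N = pre (select x y) (Nat.count (fun i => y i = true) N) := by
  induction N with
  | zero => rfl
  | succ N ih =>
    rw [selectPrefix, ih, Nat.count_succ]
    cases hyN : y N with
    | false => simp
    | true => simp [pre_succ, select, Nat.nth_count (p := fun i => y i = true) hyN]

/-- The string analogue of `x/y`. -/
def selectString (y : ℕ → Bool) (t : List Bool) : List Bool :=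
  selectPrefix y (fun k => t.getD k false) t.length

lemma selectString_pre (y x : ℕ → Bool) (N : ℕ) :
    selectString y (pre x N) = pre (select x y) (Nat.count (fun i => y i = true) N) := by
  rw [selectString, pre_length, ← selectPrefix_eq_pre_select]
  exact selectPrefix_congr y fun k hk => by simp [pre, hk]

lemma computable_selectString {y : ℕ → Bool} (hy : Computable y) :
    Computable (selectString y) := by
  have hstep : Computable₂ fun (t : List Bool) (p : ℕ × List Bool) =>
      p.2 ++ cond (y p.1) [t.getD p.1 false] [] :=
    Computable.list_append.comp (Computable.snd.comp .snd)
      (Computable.cond (hy.comp (Computable.fst.comp .snd))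
        (Computable.list_cons.comp
          ((Primrec.list_getD false).to_comp.comp .fst (Computable.fst.comp .snd))
          (.const []))
        (.const []))
  refine (Computable.nat_rec Computable.list_length (.const []) hstep).of_eq fun t => ?_
  suffices ∀ N, Nat.rec [] (fun n ih => ih ++ cond (y n) [t.getD n false] []) N =
      selectPrefix y (fun k => t.getD k false) N from this t.length
  intro N
  induction N with
  | zero => rfl
  | succ N ih => rw [selectPrefix, ← ih]

def pullbackTest (y : ℕ → Bool) (U : ℕ → Set (List Bool)) : ℕ → Set (List Bool) :=
  fun n => {t | selectString y t ∈ U n}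

variable {y : ℕ → Bool} {U : ℕ → Set (List Bool)}

lemma openU_pullbackTest (hy : {i | y i = true}.Infinite) (n : ℕ) :
    openU (pullbackTest y U) n = (fun x => select x y) ⁻¹' openU U n := by
  ext x
  simp only [openU, pullbackTest, Set.mem_preimage, Set.mem_iUnion, Set.mem_ofPred_eq,
    exists_prop]
  constructor
  · rintro ⟨t, ht, hx⟩
    rw [← mem_cyl_iff_pre_eq.1 hx, selectString_pre] at ht
    exact ⟨_, ht, mem_cyl_pre _ _⟩
  · rintro ⟨s, hs, hx⟩
    refine ⟨pre x (Nat.nth (fun i => y i = true) s.length), ?_, mem_cyl_pre _ _⟩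
    rwa [selectString_pre, Nat.count_nth_of_infinite hy, mem_cyl_iff_pre_eq.1 hx]

lemma MLTest.pullbackTest {μ : Measure (ℕ → Bool)} (hU : MLTest μ U) (hyc : Computable y)
    (hy : {i | y i = true}.Infinite) (hμ : MeasurePreserving (fun x => select x y) μ μ) :
    MLTest μ (pullbackTest y U) := by
  obtain ⟨hre, hmono, hsmall⟩ := hU
  refine ⟨hre.comp (Computable.pair .fst ((computable_selectString hyc).comp .snd)),
    fun n => ?_, fun n => ?_⟩
  · rw [openU_pullbackTest hy, openU_pullbackTest hy]
    exact Set.preimage_mono (hmono n)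
  · rw [openU_pullbackTest hy, hμ.measure_preimage (measurableSet_openU U n).nullMeasurableSet]
    exact hsmall n

lemma MLRandom.select {μ : Measure (ℕ → Bool)} {x : ℕ → Bool} (hx : MLRandom μ x)
    (hyc : Computable y) (hy : {i | y i = true}.Infinite)
    (hμ : MeasurePreserving (fun x => select x y) μ μ) : MLRandom μ (select x y) := by
  intro U hU
  obtain ⟨n, hn⟩ := hx _ (hU.pullbackTest hyc hy hμ)
  exact ⟨n, fun hsel => hn (by rwa [openU_pullbackTest hy])⟩

end PullbackTest

theorem stmt5_general (μ : Measure (ℕ → Bool)) (hμ : IsUniform μ)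
    (y : ℕ → Bool) (hycomp : Computable y) (hyinf : {i | y i = true}.Infinite)
    (x : ℕ → Bool) (hx : MLRandom μ x) :
    MLRandom μ (select x y) :=
  hx.select hycomp hyinf (hμ.measurePreserving_select hyinf)

/-- If `y` is a computable sequence with infinitely many 1's, then
selection by `y` preserves ML-randomness w.r.t. the uniform measure: for every
`x ∈ R`, also `x/y ∈ R`. -/
theorem stmt5 (μ : Measure (ℕ → Bool)) [IsProbabilityMeasure μ] (hμ : IsUniform μ)
    (y : ℕ → Bool) (hycomp : Computable y) (hyinf : {i | y i = true}.Infinite)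
    (x : ℕ → Bool) (hx : MLRandom μ x) :
    MLRandom μ (select x y) :=
  stmt5_general μ hμ y hycomp hyinf x hx
end

section
/- Let x ∈ {0,1}^ℕ with lim_n K(x_1⋯x_n)/n = 1, and let y ∈ {0,1}^ℕ with lim_n K(y_1⋯y_n)/n = 0 and lim_n (1/n)∑_{i≤n} y_i = 1. Then lim_n K(x_1^n/y_1^n)/n₁ = 1, where n₁ = ∑_{i≤n} y_i. -/
open MeasureTheory Filter

/-! Write `a` and `b` for the selected and the deselected parts of `x_1^n`. The length bound
gives `K(a) ≤ n₁ + O(log n)` and `K(b) ≤ (n - n₁) + O(log n) = o(n)`, while splitting `x_1^n`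
into `(a, b, y_1^n)` and then dropping `b` and `y_1^n` gives
`K(x_1^n) ≤ K(a) + K(b) + 2 K(y_1^n) + O(1) = K(a) + o(n)`. Hence `K(a)/n → 1`, and `n₁/n → 1`
turns this into `K(a)/n₁ → 1`. -/

open Topology

theorem tendsto_natLog_succ_div :
    Tendsto (fun n : ℕ => (Nat.log 2 (n + 1) : ℝ) / n) atTop (𝓝 0) := by
  have hlog : Tendsto (fun n : ℕ => Real.log ((n : ℝ) + 1) / n) atTop (𝓝 0) := by
    have := (Real.tendsto_pow_log_div_mul_add_atTop 1 (-1) 1 one_ne_zero).comp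
      (tendsto_atTop_add_const_right _ 1 tendsto_natCast_atTop_atTop)
    exact this.congr fun n => by simp
  refine squeeze_zero (fun n => by positivity) (fun n => ?_)
    (by simpa using hlog.const_mul (Real.log 2)⁻¹)
  calc (Nat.log 2 (n + 1) : ℝ) / n ≤ Real.logb 2 ((n : ℝ) + 1) / n := by
        gcongr; exact_mod_cast Real.natLog_le_logb (n + 1) 2
    _ = (Real.log 2)⁻¹ * (Real.log ((n : ℝ) + 1) / n) := by rw [Real.logb]; ring

theorem tendsto_logOverhead_div (c : ℕ) :
    Tendsto (fun n : ℕ => ((c * (Nat.log 2 (n + 1) + 1) : ℕ) : ℝ) / n) atTop (𝓝 0) := by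
  simpa [mul_add, add_div, mul_div_assoc] using
    (tendsto_natLog_succ_div.const_mul (c : ℝ)).add (tendsto_const_div_atTop_nhds_zero_nat (c : ℝ))

theorem length_pre (y : ℕ → Bool) (n : ℕ) : (pre y n).length = n := List.length_ofFn

theorem tendsto_count_false_div {y : ℕ → Bool}
    (hdens : Tendsto (fun n => ((pre y n).count true : ℝ) / n) atTop (𝓝 1)) :
    Tendsto (fun n => ((pre y n).count false : ℝ) / n) atTop (𝓝 0) := by
  have hlim : Tendsto (fun n => 1 - ((pre y n).count true : ℝ) / n) atTop (𝓝 0) := by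
    simpa using (tendsto_const_nhds (x := (1 : ℝ))).sub hdens
  refine hlim.congr' ?_
  filter_upwards [eventually_ne_atTop 0] with n hn
  have hcount : ((pre y n).count false : ℝ) + (pre y n).count true = n := by
    exact_mod_cast (length_pre y n ▸ List.count_not_add_count (pre y n) true)
  field_simp
  linarith

theorem length_selStr {s t : List Bool} (h : s.length = t.length) :
    (selStr s t).length = t.count true := by
  induction s generalizing t with
  | nil => cases t <;> simp_all [selStr]
  | cons a s ih =>
    cases t with
    | nil => simp at h
    | cons b t =>
      cases b <;> simp [selStr, ← ih (by simpa using h)]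

theorem count_true_map_not (t : List Bool) : (t.map not).count true = t.count false :=
  List.count_map_of_injective t not Bool.not_injective false

section

open Encodable

theorem K_selStr_le (K : ℕ → ℕ) {c : ℕ}
    (hLen : ∀ s : List Bool, K (encode s) ≤ s.length + c * (Nat.log 2 (s.length + 1) + 1))
    {s t : List Bool} (h : s.length = t.length) :
    K (encode (selStr s t)) ≤ t.count true + c * (Nat.log 2 (t.length + 1) + 1) := by
  refine (hLen _).trans ?_
  rw [length_selStr h]
  gcongr
  exact List.count_le_length

theorem K_pre_le_K_selStr_add (K : ℕ → ℕ) {c₁ c₂ c : ℕ}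
    (hSplit : ∀ (x y : ℕ → Bool) (n : ℕ),
      |(K (encode (pre x n)) : ℤ) -
        K (encode (selStr (pre x n) (pre y n),
                   selStr (pre x n) ((pre y n).map not), pre y n))| ≤
        K (encode (pre y n)) + c₁)
    (hDrop : ∀ a b t : List Bool,
      |(K (encode a) : ℤ) - K (encode (a, b, t))| ≤ K (encode b) + K (encode t) + c₂)
    (hLen : ∀ s : List Bool, K (encode s) ≤ s.length + c * (Nat.log 2 (s.length + 1) + 1))
    (x y : ℕ → Bool) (n : ℕ) :
    (K (encode (pre x n)) : ℝ) ≤ K (encode (selStr (pre x n) (pre y n))) +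
      (pre y n).count false + ((c * (Nat.log 2 (n + 1) + 1) : ℕ) : ℝ) +
      2 * K (encode (pre y n)) + (c₁ + c₂ : ℕ) := by
  have hsplit := abs_le.mp (hSplit x y n)
  have hdrop := abs_le.mp (hDrop (selStr (pre x n) (pre y n))
    (selStr (pre x n) ((pre y n).map not)) (pre y n))
  have hrest : (K (encode (selStr (pre x n) ((pre y n).map not))) : ℤ) ≤
      (pre y n).count false + ((c * (Nat.log 2 (n + 1) + 1) : ℕ) : ℤ) := by
    have := K_selStr_le K hLen (s := pre x n) (t := (pre y n).map not) (by simp [length_pre])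
    rw [count_true_map_not, List.length_map, length_pre] at this
    exact_mod_cast this
  have : (K (encode (pre x n)) : ℤ) ≤ K (encode (selStr (pre x n) (pre y n))) +
      (pre y n).count false + ((c * (Nat.log 2 (n + 1) + 1) : ℕ) : ℤ) +
      2 * K (encode (pre y n)) + (c₁ + c₂ : ℕ) := by
    push_cast at hsplit hdrop hrest ⊢
    linarith [hsplit.2, hdrop.1]
  exact_mod_cast this

end

open Encodable in
theorem stmt14_general (K : ℕ → ℕ)
    (hSplit : ∃ c : ℕ, ∀ (x y : ℕ → Bool) (n : ℕ),
      |(K (encode (pre x n)) : ℤ) -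
        K (encode (selStr (pre x n) (pre y n),
                   selStr (pre x n) ((pre y n).map not), pre y n))| ≤
        K (encode (pre y n)) + c)
    (hDrop : ∃ c : ℕ, ∀ a b t : List Bool,
      |(K (encode a) : ℤ) - K (encode (a, b, t))| ≤ K (encode b) + K (encode t) + c)
    (hLen : ∃ c : ℕ, ∀ s : List Bool,
      K (encode s) ≤ s.length + c * (Nat.log 2 (s.length + 1) + 1))
    (x y : ℕ → Bool)
    (hxK : Tendsto (fun n => (K (encode (pre x n)) : ℝ) / n) atTop (nhds 1))
    (hyK : Tendsto (fun n => (K (encode (pre y n)) : ℝ) / n) atTop (nhds 0))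
    (hdens : Tendsto (fun n => (((pre y n).count true : ℝ)) / n) atTop (nhds 1)) :
    Tendsto (fun n => (K (encode (selStr (pre x n) (pre y n))) : ℝ) /
      (pre y n).count true) atTop (nhds 1) := by
  obtain ⟨c₁, hSplit⟩ := hSplit
  obtain ⟨c₂, hDrop⟩ := hDrop
  obtain ⟨c, hLen⟩ := hLen
  have hE := tendsto_logOverhead_div c
  have hlow := (((hxK.sub (tendsto_count_false_div hdens)).sub hE).sub (hyK.const_mul 2)).sub
    (tendsto_const_div_atTop_nhds_zero_nat ((c₁ + c₂ : ℕ) : ℝ))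
  have hsel : Tendsto (fun n => (K (encode (selStr (pre x n) (pre y n))) : ℝ) / n)
      atTop (𝓝 1) := by
    refine tendsto_of_tendsto_of_tendsto_of_le_of_le (by convert hlow using 2; norm_num)
      (by simpa using hdens.add hE) (fun n => ?_) (fun n => ?_)
    · calc _ = ((K (encode (pre x n)) : ℝ) - (pre y n).count false -
            ((c * (Nat.log 2 (n + 1) + 1) : ℕ) : ℝ) - 2 * K (encode (pre y n)) -
            (c₁ + c₂ : ℕ)) / n := by ring
        _ ≤ _ := by
          gcongr
          linarith [K_pre_le_K_selStr_add K hSplit hDrop hLen x y n]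
    · calc _ ≤ (((pre y n).count true + c * (Nat.log 2 (n + 1) + 1) : ℕ) : ℝ) / n := by
            gcongr
            simpa [length_pre] using K_selStr_le K hLen (s := pre x n) (t := pre y n)
              (by simp [length_pre])
        _ = _ := by push_cast; ring
  rw [← div_one (1 : ℝ)]
  refine (hsel.div hdens one_ne_zero).congr' ?_
  filter_upwards [eventually_ne_atTop 0] with n hn
  exact div_div_div_cancel_right₀ (by exact_mod_cast hn) _ _

open Encodable in
/-- Let `K` be a prefix complexity (of encoded objects) satisfying
the standard facts listed below. If `K(x_1^n)/n → 1`, `K(y_1^n)/n → 0` and the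
density of 1's in `y` tends to 1, then `K(x_1^n/y_1^n)/n₁ → 1`, where
`n₁ = ∑_{i≤n} y_i` is the length of the selected subsequence. -/
theorem stmt14 (K : ℕ → ℕ)
    (hSplit : ∃ c : ℕ, ∀ (x y : ℕ → Bool) (n : ℕ),
      |(K (encode (pre x n)) : ℤ) -
        K (encode (selStr (pre x n) (pre y n),
                   selStr (pre x n) ((pre y n).map not), pre y n))| ≤
        K (encode (pre y n)) + c)
    (hSub3 : ∃ c : ℕ, ∀ a b t : List Bool,
      K (encode (a, b, t)) ≤ K (encode a) + K (encode b) + K (encode t) + c)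
    (hDrop : ∃ c : ℕ, ∀ a b t : List Bool,
      |(K (encode a) : ℤ) - K (encode (a, b, t))| ≤ K (encode b) + K (encode t) + c)
    (hLen : ∃ c : ℕ, ∀ s : List Bool,
      K (encode s) ≤ s.length + c * (Nat.log 2 (s.length + 1) + 1))
    (x y : ℕ → Bool)
    (hxK : Tendsto (fun n => (K (encode (pre x n)) : ℝ) / n) atTop (nhds 1))
    (hyK : Tendsto (fun n => (K (encode (pre y n)) : ℝ) / n) atTop (nhds 0))
    (hdens : Tendsto (fun n => (((pre y n).count true : ℝ)) / n) atTop (nhds 1)) :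
    Tendsto (fun n => (K (encode (selStr (pre x n) (pre y n))) : ℝ) /
      (pre y n).count true) atTop (nhds 1) :=
  stmt14_general K hSplit hDrop hLen x y hxK hyK hdens
end
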